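/- arXiv:1703.04177 — 6 statements merged into one kernel-verified Lean document; each statement's English description precedes it below -/
import Mathlib

section
/- Let T > 0, let γ ≥ 1 be real, let n ≥ 2 be an integer, and let (t_j) be the Kusuoka partition of [0,T] with parameter γ and n+1 points. Then for every j with 0 ≤ j ≤ n−2 one has t_{j+1} − t_j ≤ 2^{γ−1} γ T n^{−1} (1 − (j+1)/n)^{γ−1}. -/
/-!
The Kusuoka points satisfy `t_{j+1} - t_j = T ((b + 1/n)^γ - b^γ)` with `b = 1 - (j+1)/n`.
By convexity of `x ↦ x^γ` this is at most `T γ (b + 1/n)^(γ-1) / n`, and for `j ≤ n - 2` the step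
`1/n` is at most `b`, so `(b + 1/n)^(γ-1) ≤ (2b)^(γ-1)`.
-/

namespace Real

lemma add_mul_rpow_sub_one_mul_sub_le_rpow {a b γ : ℝ} (ha : 0 < a) (hb : 0 ≤ b) (hγ : 1 ≤ γ) :
    a ^ γ + γ * a ^ (γ - 1) * (b - a) ≤ b ^ γ := by
  have bernoulli : 1 + γ * (b / a - 1) ≤ (b / a) ^ γ := by
    simpa using one_add_mul_self_le_rpow_one_add (s := b / a - 1)
      (by linarith [div_nonneg hb ha.le]) hγ
  have haγ : 0 < a ^ γ := rpow_pos_of_pos ha γ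
  calc a ^ γ + γ * a ^ (γ - 1) * (b - a) = a ^ γ * (1 + γ * (b / a - 1)) := by
        rw [rpow_sub_one ha.ne']; field_simp
    _ ≤ a ^ γ * (b / a) ^ γ := by gcongr
    _ = b ^ γ := by rw [div_rpow hb ha.le]; field_simp

lemma add_rpow_sub_rpow_le {b h γ : ℝ} (hh : 0 ≤ h) (hhb : h ≤ b) (hγ : 1 ≤ γ) :
    (b + h) ^ γ - b ^ γ ≤ 2 ^ (γ - 1) * γ * h * b ^ (γ - 1) := by
  obtain rfl | hb := (hh.trans hhb).eq_or_lt
  · obtain rfl : h = 0 := le_antisymm hhb hh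
    simp
  have tangent := add_mul_rpow_sub_one_mul_sub_le_rpow (a := b + h) (by linarith) hb.le hγ
  calc (b + h) ^ γ - b ^ γ ≤ γ * (b + h) ^ (γ - 1) * h := by linarith
    _ ≤ γ * (2 * b) ^ (γ - 1) * h := by gcongr; linarith
    _ = 2 ^ (γ - 1) * γ * h * b ^ (γ - 1) := by rw [mul_rpow zero_le_two hb.le]; ring

end Real

theorem stmt_0_general (T γ : ℝ) (hT : 0 < T) (hγ : 1 ≤ γ) (n : ℕ) (hn : 2 ≤ n)
    (t : ℕ → ℝ)
    (ht : ∀ j, j ≤ n - 1 → t j = T * (1 - (1 - (j : ℝ) / n) ^ γ)) :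
    ∀ j, j ≤ n - 2 →
      t (j + 1) - t j
        ≤ (2 : ℝ) ^ (γ - 1) * γ * T * (n : ℝ)⁻¹ * (1 - ((j : ℝ) + 1) / n) ^ (γ - 1) := by
  intro j hj
  have hn₀ : (0 : ℝ) < n := by positivity
  have hjn : (j : ℝ) + 2 ≤ n := by exact_mod_cast (by omega : j + 2 ≤ n)
  set b : ℝ := 1 - ((j : ℝ) + 1) / n
  have ht_succ : t (j + 1) = T * (1 - b ^ γ) := by
    rw [ht (j + 1) (by omega)]; push_cast; rfl
  have ht_j : t j = T * (1 - (b + (n : ℝ)⁻¹) ^ γ) := by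
    rw [ht j (by omega)]; congr 3; simp only [b]; field_simp; ring
  have hstep : (n : ℝ)⁻¹ ≤ b := by
    rw [le_sub_iff_add_le, inv_eq_one_div, ← add_div, div_le_one hn₀]; linarith
  calc t (j + 1) - t j = T * ((b + (n : ℝ)⁻¹) ^ γ - b ^ γ) := by rw [ht_succ, ht_j]; ring
    _ ≤ T * (2 ^ (γ - 1) * γ * (n : ℝ)⁻¹ * b ^ (γ - 1)) := by
        gcongr; exact Real.add_rpow_sub_rpow_le (by positivity) hstep hγ
    _ = _ := by ring

/-- For the Kusuoka partition of `[0,T]` with parameter `γ ≥ 1` and `n+1` points,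
defined by `t j = T * (1 - (1 - j/n)^γ)` for `j ≤ n-1` and `t n = T`, one has, for every
`0 ≤ j ≤ n-2`, `t (j+1) - t j ≤ 2^(γ-1) * γ * T * n⁻¹ * (1 - (j+1)/n)^(γ-1)`. -/
theorem stmt_0 (T γ : ℝ) (hT : 0 < T) (hγ : 1 ≤ γ) (n : ℕ) (hn : 2 ≤ n)
    (t : ℕ → ℝ)
    (ht : ∀ j, j ≤ n - 1 → t j = T * (1 - (1 - (j : ℝ) / n) ^ γ))
    (htn : t n = T) :
    ∀ j, j ≤ n - 2 →
      t (j + 1) - t j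
        ≤ (2 : ℝ) ^ (γ - 1) * γ * T * (n : ℝ)⁻¹ * (1 - ((j : ℝ) + 1) / n) ^ (γ - 1) :=
  stmt_0_general T γ hT hγ n hn t ht
end

section
/- Let T > 0, let a > b ≥ 0 be real numbers, and let γ ≥ 1 satisfy γ > (a−1)/(a−b). Then there exists a constant C > 0, depending only on T, γ, a, b, such that for every integer n ≥ 2, the Kusuoka partition (t_j) of [0,T] with parameter γ and n+1 points satisfies ∑_{j=0}^{n−2} (t_{j+1} − t_j)^a (T − t_{j+1})^{−b} ≤ C n^{−(a−1)}. -/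
/-! Write `s j = 1 - j / n`, so that `t (j + 1) - t j = T (s j ^ γ - s (j + 1) ^ γ)` and
`T - t (j + 1) = T s (j + 1) ^ γ`. For `j ≤ n - 2` we have `s j - s (j + 1) = 1 / n` and
`s j ≤ 2 s (j + 1)`, so convexity of `x ^ γ` bounds the `j`-th summand by a constant times
`n ^ (-a) s (j + 1) ^ σ` with `σ = γ (a - b) - a`; the hypothesis on `γ` says exactly `σ > -1`.
Then `∑ s (j + 1) ^ σ = n ^ (-σ) ∑_{k=1}^{n-1} k ^ σ = O(n)`, comparing `k ^ σ` with the
telescoping differences `k ^ (1 + σ) - (k - 1) ^ (1 + σ)`. -/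

open Finset Real

lemma rpow_add_mul_rpow_sub_le_rpow {x y p : ℝ} (hx : 0 < x) (hy : 0 ≤ y) (hp : 1 ≤ p) :
    x ^ p + p * x ^ (p - 1) * (y - x) ≤ y ^ p := by
  have h := one_add_mul_self_le_rpow_one_add (s := y / x - 1)
    (by linarith [div_nonneg hy hx.le]) hp
  rw [add_sub_cancel, div_rpow hy hx.le, le_div_iff₀ (rpow_pos_of_pos hx p)] at h
  calc _ = (1 + p * (y / x - 1)) * x ^ p := by rw [rpow_sub_one hx.ne']; field_simp
    _ ≤ y ^ p := h

lemma rpow_le_rpow_add_mul_rpow_sub {x y p : ℝ} (hx : 0 < x) (hy : 0 ≤ y) (hp₀ : 0 ≤ p)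
    (hp₁ : p ≤ 1) : y ^ p ≤ x ^ p + p * x ^ (p - 1) * (y - x) := by
  have h := rpow_one_add_le_one_add_mul_self (s := y / x - 1)
    (by linarith [div_nonneg hy hx.le]) hp₀ hp₁
  rw [add_sub_cancel, div_rpow hy hx.le, div_le_iff₀ (rpow_pos_of_pos hx p)] at h
  calc y ^ p ≤ (1 + p * (y / x - 1)) * x ^ p := h
    _ = _ := by rw [rpow_sub_one hx.ne']; field_simp

lemma min_one_mul_rpow_le_rpow_sub_rpow {x q : ℝ} (hx : 1 ≤ x) (hq : 0 < q) :
    min 1 q * x ^ (q - 1) ≤ x ^ q - (x - 1) ^ q := by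
  have hx₀ : 0 < x := by linarith
  rcases le_total q 1 with hq₁ | hq₁
  · have := rpow_le_rpow_add_mul_rpow_sub hx₀ (sub_nonneg.2 hx) hq.le hq₁
    rw [min_eq_right hq₁]
    linarith
  · have hsplit (z : ℝ) (hz : 0 ≤ z) : z ^ q = z ^ (q - 1) * z := by
      rw [← rpow_add_one' hz (by linarith), sub_add_cancel]
    have : (x - 1) ^ (q - 1) ≤ x ^ (q - 1) :=
      rpow_le_rpow (sub_nonneg.2 hx) (by linarith) (by linarith)
    rw [min_eq_left hq₁, hsplit x hx₀.le, hsplit (x - 1) (by linarith)]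
    nlinarith

lemma sum_range_succ_rpow_le {σ : ℝ} (hσ : -1 < σ) (N : ℕ) :
    ∑ i ∈ range N, ((i : ℝ) + 1) ^ σ ≤ (min 1 (1 + σ))⁻¹ * (N : ℝ) ^ (1 + σ) := by
  have hm : 0 < min 1 (1 + σ) := lt_min one_pos (by linarith)
  rw [← div_eq_inv_mul, le_div_iff₀' hm, mul_sum]
  calc ∑ i ∈ range N, min 1 (1 + σ) * ((i : ℝ) + 1) ^ σ
      ≤ ∑ i ∈ range N, (((i + 1 : ℕ) : ℝ) ^ (1 + σ) - ((i : ℕ) : ℝ) ^ (1 + σ)) := by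
        gcongr with i
        simpa using min_one_mul_rpow_le_rpow_sub_rpow (x := (i : ℝ) + 1) (by simp)
          (by linarith : 0 < 1 + σ)
    _ = (N : ℝ) ^ (1 + σ) := by
        rw [sum_range_sub (fun i : ℕ ↦ (i : ℝ) ^ (1 + σ))]
        simp [zero_rpow (by linarith : 1 + σ ≠ 0)]

lemma sum_range_one_sub_div_rpow_le {σ : ℝ} (hσ : -1 < σ) {n : ℕ} (hn : 0 < n) :
    ∑ j ∈ range (n - 1), (1 - ((j : ℝ) + 1) / n) ^ σ ≤ (min 1 (1 + σ))⁻¹ * n := by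
  have hn' : (0 : ℝ) < n := by exact_mod_cast hn
  have hreflect : ∑ j ∈ range (n - 1), (1 - ((j : ℝ) + 1) / n) ^ σ
      = (∑ i ∈ range (n - 1), ((i : ℝ) + 1) ^ σ) / (n : ℝ) ^ σ := by
    rw [← sum_range_reflect, sum_div]
    refine sum_congr rfl fun j hj ↦ ?_
    rw [mem_range] at hj
    rw [← div_rpow (by positivity) hn'.le, Nat.cast_sub (by omega : j ≤ n - 1 - 1),
      Nat.cast_sub (by omega : 1 ≤ n - 1), Nat.cast_sub hn]
    congr 1
    field_simp
    ring
  rw [hreflect, div_le_iff₀ (rpow_pos_of_pos hn' σ)]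
  calc ∑ i ∈ range (n - 1), ((i : ℝ) + 1) ^ σ
      ≤ (min 1 (1 + σ))⁻¹ * ((n - 1 : ℕ) : ℝ) ^ (1 + σ) := sum_range_succ_rpow_le hσ _
    _ ≤ (min 1 (1 + σ))⁻¹ * (n : ℝ) ^ (1 + σ) := by
        gcongr
        · exact inv_nonneg.2 (le_min zero_le_one (by linarith))
        · linarith
        · exact_mod_cast Nat.sub_le n 1
    _ = (min 1 (1 + σ))⁻¹ * n * (n : ℝ) ^ σ := by rw [rpow_add hn', rpow_one]; ring

lemma rpow_sub_rpow_le_of_le_two_mul {x y γ : ℝ} (hy : 0 < y) (hxy : y ≤ x) (hx : x ≤ 2 * y)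
    (hγ : 1 ≤ γ) : x ^ γ - y ^ γ ≤ γ * 2 ^ (γ - 1) * y ^ (γ - 1) * (x - y) := by
  have htangent := rpow_add_mul_rpow_sub_le_rpow (hy.trans_le hxy) hy.le hγ
  have hx' : x ^ (γ - 1) ≤ 2 ^ (γ - 1) * y ^ (γ - 1) := by
    rw [← mul_rpow zero_le_two hy.le]
    exact rpow_le_rpow (by linarith) hx (by linarith)
  have : 0 ≤ γ * (x - y) := mul_nonneg (by linarith) (by linarith)
  nlinarith

lemma kusuoka_term_le_of_le_two_mul {T a b x y γ : ℝ} (hT : 0 < T) (ha : 0 ≤ a)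
    (hy : 0 < y) (hxy : y ≤ x) (hx : x ≤ 2 * y) (hγ : 1 ≤ γ) :
    (T * (x ^ γ - y ^ γ)) ^ a * (T * y ^ γ) ^ (-b)
      ≤ T ^ (a - b) * γ ^ a * 2 ^ ((γ - 1) * a) * ((x - y) ^ a * y ^ (γ * (a - b) - a)) := by
  have hγ₀ : 0 ≤ γ := by linarith
  have hxy' : 0 ≤ x - y := by linarith
  calc (T * (x ^ γ - y ^ γ)) ^ a * (T * y ^ γ) ^ (-b)
      ≤ (T * (γ * 2 ^ (γ - 1) * y ^ (γ - 1) * (x - y))) ^ a * (T * y ^ γ) ^ (-b) := by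
        have : 0 ≤ x ^ γ - y ^ γ := sub_nonneg.2 (rpow_le_rpow hy.le hxy hγ₀)
        gcongr
        exact rpow_sub_rpow_le_of_le_two_mul hy hxy hx hγ
    _ = T ^ (a - b) * γ ^ a * 2 ^ ((γ - 1) * a) * ((x - y) ^ a * y ^ (γ * (a - b) - a)) := by
        rw [mul_rpow hT.le (by positivity), mul_rpow (by positivity) hxy',
          mul_rpow (by positivity) (by positivity), mul_rpow hγ₀ (by positivity),
          mul_rpow hT.le (by positivity), ← rpow_mul zero_le_two, ← rpow_mul hy.le,
          ← rpow_mul hy.le, sub_eq_add_neg a b, rpow_add hT,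
          show γ * (a + -b) - a = (γ - 1) * a + γ * -b by ring, rpow_add hy]
        ring

lemma kusuoka_term_le {T a b γ : ℝ} (hT : 0 < T) (ha : 0 ≤ a) (hγ : 1 ≤ γ) {n : ℕ}
    {t : ℕ → ℝ} (ht : ∀ j, j ≤ n - 1 → t j = T * (1 - (1 - (j : ℝ) / n) ^ γ)) {j : ℕ}
    (hj : j + 2 ≤ n) :
    (t (j + 1) - t j) ^ a * (T - t (j + 1)) ^ (-b)
      ≤ T ^ (a - b) * γ ^ a * 2 ^ ((γ - 1) * a)
          * ((1 / (n : ℝ)) ^ a * (1 - ((j : ℝ) + 1) / n) ^ (γ * (a - b) - a)) := by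
  have hn : (0 : ℝ) < n := by exact_mod_cast (by omega : 0 < n)
  have hjn : (j : ℝ) + 2 ≤ n := by exact_mod_cast hj
  have htj := ht (j + 1) (by omega)
  push_cast at htj
  have hinc : t (j + 1) - t j = T * ((1 - (j : ℝ) / n) ^ γ - (1 - ((j : ℝ) + 1) / n) ^ γ) := by
    rw [htj, ht j (by omega)]
    ring
  have hrem : T - t (j + 1) = T * (1 - ((j : ℝ) + 1) / n) ^ γ := by
    rw [htj]
    ring
  have hstep : (1 - (j : ℝ) / n) - (1 - ((j : ℝ) + 1) / n) = 1 / n := by field_simp; ring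
  have hy : 0 < 1 - ((j : ℝ) + 1) / n := by
    rw [sub_pos, div_lt_one hn]
    linarith
  have hx : 1 - (j : ℝ) / n ≤ 2 * (1 - ((j : ℝ) + 1) / n) := by
    have : ((j : ℝ) + 2) / n ≤ 1 := (div_le_one hn).2 hjn
    have : 2 * (1 - ((j : ℝ) + 1) / n) - (1 - (j : ℝ) / n) = 1 - ((j : ℝ) + 2) / n := by
      field_simp
      ring
    linarith
  rw [hinc, hrem, ← hstep]
  exact kusuoka_term_le_of_le_two_mul hT ha hy (by linarith [one_div_pos.2 hn]) hx hγ

/-- For `T > 0`, reals `a > b ≥ 0` and `γ ≥ 1` with `γ > (a-1)/(a-b)`, there is a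
constant `C > 0` (depending only on `T, γ, a, b`) such that for every `n ≥ 2`, the Kusuoka
partition `t j = T * (1 - (1 - j/n)^γ)` (for `j ≤ n-1`), `t n = T`, satisfies
`∑_{j=0}^{n-2} (t (j+1) - t j)^a * (T - t (j+1))^(-b) ≤ C * n^(-(a-1))`. -/
theorem stmt_1 (T a b γ : ℝ) (hT : 0 < T) (hb : 0 ≤ b) (hab : b < a)
    (hγ1 : 1 ≤ γ) (hγ : (a - 1) / (a - b) < γ) :
    ∃ C > 0, ∀ n : ℕ, 2 ≤ n → ∀ t : ℕ → ℝ,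
      (∀ j, j ≤ n - 1 → t j = T * (1 - (1 - (j : ℝ) / n) ^ γ)) →
      t n = T →
      ∑ j ∈ Finset.range (n - 1), (t (j + 1) - t j) ^ a * (T - t (j + 1)) ^ (-b)
        ≤ C * (n : ℝ) ^ (-(a - 1)) := by
  have ha : 0 ≤ a := by linarith
  have hσ : -1 < γ * (a - b) - a := by
    have := (div_lt_iff₀ (sub_pos.2 hab)).1 hγ
    linarith
  set K := T ^ (a - b) * γ ^ a * 2 ^ ((γ - 1) * a)
  set M := (min 1 (1 + (γ * (a - b) - a)))⁻¹
  have hM : 0 < M := inv_pos.2 (lt_min one_pos (by linarith))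
  refine ⟨K * M, by positivity, fun n hn t ht _ ↦ ?_⟩
  have hn' : (0 : ℝ) < n := by positivity
  calc ∑ j ∈ range (n - 1), (t (j + 1) - t j) ^ a * (T - t (j + 1)) ^ (-b)
      ≤ ∑ j ∈ range (n - 1),
          K * ((1 / (n : ℝ)) ^ a * (1 - ((j : ℝ) + 1) / n) ^ (γ * (a - b) - a)) :=
        sum_le_sum fun j hj ↦ kusuoka_term_le hT ha hγ1 ht (by rw [mem_range] at hj; omega)
    _ = K * (1 / (n : ℝ)) ^ a
          * ∑ j ∈ range (n - 1), (1 - ((j : ℝ) + 1) / n) ^ (γ * (a - b) - a) := by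
        rw [mul_sum]
        exact sum_congr rfl fun j _ ↦ by ring
    _ ≤ K * (1 / (n : ℝ)) ^ a * (M * n) := by
        gcongr
        exact sum_range_one_sub_div_rpow_le hσ (by omega)
    _ = K * M * (n : ℝ) ^ (-(a - 1)) := by
        rw [div_rpow zero_le_one hn'.le, one_rpow, show -(a - 1) = 1 - a by ring, rpow_sub hn',
          rpow_one]
        ring
end

section
/- Let T > 0 and let integers r ≥ 1 and n ≥ 1. Define t_0 = 0 and t_{k+1} = t_k + T n^{−r/(k+1)} for k = 0, …, r−1. Then for every 0 ≤ j ≤ r−1: (i) for each 0 ≤ k ≤ j one has t_{j+1} − t_{j−k} ≤ (k+1) T n^{−r/(j+1)}, and (ii) (1/(j+1)!) · ∏_{k=0}^{j} (t_{j+1} − t_{j−k}) ≤ T^{j+1} n^{−r}. -/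
/-- Let `T > 0` and integers `r ≥ 1`, `n ≥ 1`. Define `t 0 = 0` and
`t (k+1) = t k + T * n^(-r/(k+1))` for `k = 0, …, r-1`. Then for every `0 ≤ j ≤ r-1`:
(i) for each `0 ≤ k ≤ j`, `t (j+1) - t (j-k) ≤ (k+1) * T * n^(-r/(j+1))`, and
(ii) `(1/(j+1)!) * ∏_{k=0}^{j} (t (j+1) - t (j-k)) ≤ T^(j+1) * n^(-r)`. -/
theorem stmt_3 (T : ℝ) (hT : 0 < T) (r n : ℕ) (hr : 1 ≤ r) (hn : 1 ≤ n)
    (t : ℕ → ℝ) (h0 : t 0 = 0)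
    (hstep : ∀ k, k ≤ r - 1 →
      t (k + 1) = t k + T * (n : ℝ) ^ (-((r : ℝ) / ((k : ℝ) + 1)))) :
    ∀ j, j ≤ r - 1 →
      (∀ k, k ≤ j →
        t (j + 1) - t (j - k)
          ≤ ((k : ℝ) + 1) * T * (n : ℝ) ^ (-((r : ℝ) / ((j : ℝ) + 1))))
      ∧ ((Nat.factorial (j + 1) : ℝ))⁻¹ * ∏ k ∈ Finset.range (j + 1), (t (j + 1) - t (j - k))
          ≤ T ^ (j + 1) * (n : ℝ) ^ (-(r : ℝ)) := by
  have hn1 : (1 : ℝ) ≤ (n : ℝ) := by exact_mod_cast hn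
  have hn0 : (0 : ℝ) < (n : ℝ) := by linarith
  intro j hj
  set c : ℝ := (n : ℝ) ^ (-((r : ℝ) / ((j : ℝ) + 1))) with hc
  have hcpos : 0 < c := Real.rpow_pos_of_pos hn0 _
  -- each single step with index i ≤ j is ≤ T * c
  have hstepb : ∀ i, i ≤ j → t (i + 1) - t i ≤ T * c ∧ 0 ≤ t (i + 1) - t i := by
    intro i hi
    have hir : i ≤ r - 1 := hi.trans hj
    have hs := hstep i hir
    have hmono : (n : ℝ) ^ (-((r : ℝ) / ((i : ℝ) + 1))) ≤ c := by
      apply Real.rpow_le_rpow_of_exponent_le hn1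
      have h1 : (0:ℝ) < (i : ℝ) + 1 := by positivity
      have h2 : (0:ℝ) < (j : ℝ) + 1 := by positivity
      have h3 : (i : ℝ) + 1 ≤ (j : ℝ) + 1 := by exact_mod_cast Nat.succ_le_succ hi
      have hr0 : (0:ℝ) ≤ (r : ℝ) := by positivity
      have := div_le_div_of_nonneg_left hr0 h1 h3
      linarith
    constructor
    · rw [hs]
      have : T * (n : ℝ) ^ (-((r : ℝ) / ((i : ℝ) + 1))) ≤ T * c :=
        mul_le_mul_of_nonneg_left hmono hT.le
      linarith
    · rw [hs]
      have : 0 < T * (n : ℝ) ^ (-((r : ℝ) / ((i : ℝ) + 1))) := by positivity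
      linarith
  -- key: bounds on t(j+1) - t(j-k)
  have key : ∀ k, k ≤ j → 0 ≤ t (j + 1) - t (j - k) ∧
      t (j + 1) - t (j - k) ≤ ((k : ℝ) + 1) * (T * c) := by
    intro k
    induction k with
    | zero =>
      intro _
      simpa using (hstepb j le_rfl).symm.imp id (by intro h; linarith)
    | succ k ih =>
      intro hk
      have hk' : k ≤ j := Nat.le_of_succ_le hk
      obtain ⟨ih0, ih1⟩ := ih hk'
      have hjk : j - (k + 1) + 1 = j - k := by omega
      have hm : j - (k + 1) ≤ j := by omega
      obtain ⟨hs1, hs0⟩ := hstepb (j - (k + 1)) hm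
      rw [hjk] at hs1 hs0
      constructor
      · linarith
      · push_cast
        linarith
  constructor
  · intro k hk
    have := (key k hk).2
    calc t (j + 1) - t (j - k) ≤ ((k : ℝ) + 1) * (T * c) := this
      _ = ((k : ℝ) + 1) * T * c := by ring
  · -- product bound
    have hprod : ∏ k ∈ Finset.range (j + 1), (t (j + 1) - t (j - k))
        ≤ ∏ k ∈ Finset.range (j + 1), (((k : ℝ) + 1) * (T * c)) := by
      apply Finset.prod_le_prod
      · intro k hk
        exact (key k (Nat.lt_succ_iff.mp (Finset.mem_range.mp hk))).1
      · intro k hk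
        exact (key k (Nat.lt_succ_iff.mp (Finset.mem_range.mp hk))).2
    have hfact : ∏ k ∈ Finset.range (j + 1), (((k : ℝ) + 1) * (T * c))
        = (Nat.factorial (j + 1) : ℝ) * (T * c) ^ (j + 1) := by
      rw [Finset.prod_mul_distrib, Finset.prod_const, Finset.card_range]
      congr 1
      exact_mod_cast congrArg (Nat.cast (R := ℝ)) (Finset.prod_range_add_one_eq_factorial (j + 1))
    have hcpow : c ^ (j + 1) = (n : ℝ) ^ (-(r : ℝ)) := by
      rw [hc, ← Real.rpow_natCast ((n:ℝ) ^ _) (j+1), ← Real.rpow_mul hn0.le]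
      congr 1
      have : ((j : ℝ) + 1) ≠ 0 := by positivity
      push_cast
      field_simp
    have hfpos : (0 : ℝ) < (Nat.factorial (j + 1) : ℝ) := by
      exact_mod_cast Nat.factorial_pos (j + 1)
    calc ((Nat.factorial (j + 1) : ℝ))⁻¹ * ∏ k ∈ Finset.range (j + 1), (t (j + 1) - t (j - k))
        ≤ ((Nat.factorial (j + 1) : ℝ))⁻¹ * ((Nat.factorial (j + 1) : ℝ) * (T * c) ^ (j + 1)) := by
          apply mul_le_mul_of_nonneg_left _ (by positivity)
          rw [← hfact]; exact hprod
      _ = (T * c) ^ (j + 1) := by field_simp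
      _ = T ^ (j + 1) * c ^ (j + 1) := mul_pow _ _ _
      _ = T ^ (j + 1) * (n : ℝ) ^ (-(r : ℝ)) := by rw [hcpow]
end

section
/- Let T > 0, let a > b ≥ 0 be real numbers, and let γ ≥ 1 satisfy γ > (a−1)/(a−b). Then there exists a constant C > 0, depending only on T, γ, a, b, such that for all integers n ≥ 2 and r ≥ 1 with r ≤ n/2, the modified Kusuoka partition (t_j) of [0,T] with parameters γ, r and n+1 points satisfies ∑_{j=r}^{n−2} (t_{j+1} − t_j)^a (T − t_{j+1})^{−b} ≤ C (1 − r/n)^{−b} (n − r)^{−(a−1)}. -/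
/-!
Put `S = T - t_r` and `m = n - r`. On the graded part `T - t_{n-k} = S (k/m)^γ`, so after the
reflection `k = n - 1 - j` the `k`-th term is `(S((k+1)/m)^γ - S(k/m)^γ)^a (S(k/m)^γ)^(-b)`.
Bernoulli's inequality gives `u^γ - v^γ ≤ γ u^(γ-1) (u - v)`, and `k + 1 ≤ 2k`, so the term is at
most a constant times `S^(a-b) m^(-a) (k/m)^e` with `e = γ(a-b) - a`. The hypothesis on `γ` says
exactly `e > -1`, which makes `∑_{k<m} (k/m)^e = O(m)` (for `e < 0` by telescoping `k^(e+1)`).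
The initial steps matter only through `0 ≤ t_r < T`, and `(1 - r/n)^(-b) ≥ 1`.
-/

open Real Finset

section Bernoulli

variable {p u v : ℝ}

lemma rpow_mul_one_add_mul_div_sub_one (hu : 0 < u) :
    u ^ p * (1 + p * (v / u - 1)) = u ^ p - p * u ^ (p - 1) * (u - v) := by
  rw [rpow_sub_one hu.ne']
  field_simp
  ring

lemma rpow_eq_rpow_mul_div_rpow (hu : 0 < u) (hv : 0 ≤ v) : v ^ p = u ^ p * (v / u) ^ p := by
  rw [← mul_rpow hu.le (div_nonneg hv hu.le), mul_div_cancel₀ _ hu.ne']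

theorem rpow_sub_rpow_le_mul_sub (hp : 1 ≤ p) (hu : 0 < u) (hv : 0 ≤ v) :
    u ^ p - v ^ p ≤ p * u ^ (p - 1) * (u - v) := by
  have h := one_add_mul_self_le_rpow_one_add (s := v / u - 1)
    (by linarith [div_nonneg hv hu.le]) hp
  rw [add_sub_cancel] at h
  have := mul_le_mul_of_nonneg_left h (rpow_nonneg hu.le p)
  rw [rpow_mul_one_add_mul_div_sub_one hu, ← rpow_eq_rpow_mul_div_rpow hu hv] at this
  linarith

theorem mul_sub_le_rpow_sub_rpow (hp₀ : 0 ≤ p) (hp₁ : p ≤ 1) (hu : 0 < u) (hv : 0 ≤ v) :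
    p * u ^ (p - 1) * (u - v) ≤ u ^ p - v ^ p := by
  have h := rpow_one_add_le_one_add_mul_self (s := v / u - 1)
    (by linarith [div_nonneg hv hu.le]) hp₀ hp₁
  rw [add_sub_cancel] at h
  have := mul_le_mul_of_nonneg_left h (rpow_nonneg hu.le p)
  rw [rpow_mul_one_add_mul_div_sub_one hu, ← rpow_eq_rpow_mul_div_rpow hu hv] at this
  linarith

end Bernoulli

theorem sub_rpow_mul_rpow_neg_le {S a b γ u v : ℝ} (hS : 0 < S) (ha : 0 ≤ a) (hγ : 1 ≤ γ)
    (hv : 0 < v) (hvu : v ≤ u) (hu : u ≤ 2 * v) :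
    (S * u ^ γ - S * v ^ γ) ^ a * (S * v ^ γ) ^ (-b)
      ≤ S ^ (a - b) * γ ^ a * 2 ^ ((γ - 1) * a) * (u - v) ^ a * v ^ (γ * (a - b) - a) := by
  have hγ₀ : 0 ≤ γ - 1 := by linarith
  have hmvt : S * u ^ γ - S * v ^ γ ≤ S * (γ * (2 ^ (γ - 1) * v ^ (γ - 1)) * (u - v)) := by
    rw [← mul_sub, ← mul_rpow zero_le_two hv.le]
    gcongr
    exact (rpow_sub_rpow_le_mul_sub hγ (hv.trans_le hvu) hv.le).trans (by gcongr; linarith)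
  have hincr : 0 ≤ S * u ^ γ - S * v ^ γ := by
    rw [← mul_sub]
    exact mul_nonneg hS.le (sub_nonneg.mpr (by gcongr))
  calc (S * u ^ γ - S * v ^ γ) ^ a * (S * v ^ γ) ^ (-b)
      ≤ (S * (γ * (2 ^ (γ - 1) * v ^ (γ - 1)) * (u - v))) ^ a * (S * v ^ γ) ^ (-b) := by
        gcongr
    _ = S ^ (a - b) * γ ^ a * 2 ^ ((γ - 1) * a) * (u - v) ^ a * v ^ (γ * (a - b) - a) := by
        rw [mul_rpow, mul_rpow, mul_rpow, mul_rpow, mul_rpow, ← rpow_mul, ← rpow_mul,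
          ← rpow_mul, sub_eq_add_neg a b, rpow_add hS,
          show γ * (a + -b) - a = (γ - 1) * a + γ * -b by ring, rpow_add hv]
        · ring
        all_goals positivity

theorem sum_Ico_div_rpow_le {e : ℝ} (he : -1 < e) (m : ℕ) :
    ∑ k ∈ Ico 1 m, ((k : ℝ) / m) ^ e ≤ (1 + 1 / (e + 1)) * m := by
  have hc : 0 < e + 1 := by linarith
  have hm : (0 : ℝ) ≤ m := m.cast_nonneg
  rcases le_or_gt 0 e with he₀ | he₀
  · calc ∑ k ∈ Ico 1 m, ((k : ℝ) / m) ^ e ≤ ∑ _k ∈ Ico 1 m, (1 : ℝ) := by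
          refine sum_le_sum fun k hk => rpow_le_one (by positivity) ?_ he₀
          exact div_le_one_of_le₀ (by exact_mod_cast (mem_Ico.mp hk).2.le) hm
      _ ≤ m := by simp
      _ ≤ (1 + 1 / (e + 1)) * m :=
          le_mul_of_one_le_left hm (le_add_of_nonneg_right (by positivity))
  · have hterm (k : ℕ) :
        ((k : ℝ) + 1) ^ e ≤ (((k : ℝ) + 1) ^ (e + 1) - (k : ℝ) ^ (e + 1)) / (e + 1) := by
      rw [le_div_iff₀ hc, mul_comm]
      simpa using mul_sub_le_rpow_sub_rpow hc.le (by linarith) (u := k + 1) (v := k)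
        (by positivity) k.cast_nonneg
    calc ∑ k ∈ Ico 1 m, ((k : ℝ) / m) ^ e
        = m ^ (-e) * ∑ k ∈ range (m - 1), ((k : ℝ) + 1) ^ e := by
          rw [sum_Ico_eq_sum_range, mul_sum]
          refine sum_congr rfl fun k _ => ?_
          rw [div_rpow (by positivity) hm, rpow_neg hm, Nat.cast_add, Nat.cast_one, add_comm 1,
            div_eq_inv_mul]
      _ ≤ m ^ (-e) * (((m - 1 : ℕ) : ℝ) ^ (e + 1) / (e + 1)) := by
          gcongr
          refine (sum_le_sum fun k _ => hterm k).trans_eq ?_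
          rw [← sum_div]
          congr 1
          simpa [zero_rpow hc.ne'] using sum_range_sub (fun k : ℕ => (k : ℝ) ^ (e + 1)) (m - 1)
      _ ≤ m ^ (-e) * (m ^ (e + 1) / (e + 1)) := by
          gcongr
          exact_mod_cast m.sub_le 1
      _ = m / (e + 1) := by
          rw [mul_div_assoc', ← rpow_add' hm (by norm_num), neg_add_cancel_left, rpow_one]
      _ ≤ (1 + 1 / (e + 1)) * m := by
          rw [div_eq_mul_one_div, mul_comm]
          exact mul_le_mul_of_nonneg_right (le_add_of_nonneg_left zero_le_one) hm

/-- `T - t_{n-k}` on the graded part of the partition, where `S = T - t_r` and `m = n - r`. -/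
noncomputable def kusuokaGap (S γ : ℝ) (m k : ℕ) : ℝ := S * ((k : ℝ) / m) ^ γ

theorem sum_kusuokaGap_le {S a b γ : ℝ} (m : ℕ) (hS : 0 < S) (ha : 0 ≤ a) (hγ : 1 ≤ γ)
    (he : -1 < γ * (a - b) - a) :
    ∑ k ∈ Ico 1 m,
        (kusuokaGap S γ m (k + 1) - kusuokaGap S γ m k) ^ a * kusuokaGap S γ m k ^ (-b)
      ≤ S ^ (a - b) * (γ ^ a * 2 ^ ((γ - 1) * a) * (1 + 1 / (γ * (a - b) - a + 1)))
        * (m : ℝ) ^ (1 - a) := by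
  set e := γ * (a - b) - a
  have hc : 0 < 1 + 1 / (e + 1) := by
    have : 0 < e + 1 := by linarith
    positivity
  rcases m.eq_zero_or_pos with rfl | hm
  · simp only [Ico_eq_empty_of_le zero_le_one, sum_empty]
    positivity
  set D := S ^ (a - b) * γ ^ a * 2 ^ ((γ - 1) * a) * (1 / (m : ℝ)) ^ a
  have hm' : (0 : ℝ) < m := by exact_mod_cast hm
  calc ∑ k ∈ Ico 1 m, (kusuokaGap S γ m (k + 1) - kusuokaGap S γ m k) ^ a
          * kusuokaGap S γ m k ^ (-b)
      ≤ ∑ k ∈ Ico 1 m, D * ((k : ℝ) / m) ^ e := by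
        refine sum_le_sum fun k hk => ?_
        have hk : (1 : ℝ) ≤ k := by exact_mod_cast (mem_Ico.mp hk).1
        have h := sub_rpow_mul_rpow_neg_le (b := b) hS ha hγ (u := (k + 1) / m) (v := k / m)
          (by positivity) (by gcongr; linarith) (by rw [← mul_div_assoc]; gcongr; linarith)
        rw [show ((k : ℝ) + 1) / m - k / m = 1 / m by ring] at h
        simpa only [kusuokaGap, Nat.cast_add_one] using h
    _ = D * ∑ k ∈ Ico 1 m, ((k : ℝ) / m) ^ e := by rw [mul_sum]
    _ ≤ D * ((1 + 1 / (e + 1)) * m) := by gcongr; exact sum_Ico_div_rpow_le he m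
    _ = _ := by
        have hpow : (1 / (m : ℝ)) ^ a * m = m ^ (1 - a) := by
          rw [one_div, inv_rpow hm'.le, ← rpow_neg hm'.le, ← rpow_add_one hm'.ne',
            neg_add_eq_sub]
        rw [← hpow]
        ring

section KusuokaPartition

variable {T γ : ℝ} {n r : ℕ} {t : ℕ → ℝ}

theorem kusuoka_initial_bounds (hT : 0 ≤ T) (hn : 1 ≤ n) (ht0 : t 0 = 0)
    (hinit : ∀ k, k < r → t (k + 1) = t k + T * (n : ℝ) ^ (-((r : ℝ) / ((k : ℝ) + 1)))) :
    ∀ k ≤ r, 0 ≤ t k ∧ t k ≤ T * k / n := by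
  have hn' : (1 : ℝ) ≤ n := by exact_mod_cast hn
  intro k
  induction k with
  | zero => simp [ht0]
  | succ k ih =>
    intro hk
    obtain ⟨h₀, h₁⟩ := ih (by omega)
    have hstep : (n : ℝ) ^ (-((r : ℝ) / ((k : ℝ) + 1))) ≤ 1 / n := by
      rw [one_div, ← rpow_neg_one]
      refine rpow_le_rpow_of_exponent_le hn' (neg_le_neg ?_)
      rw [one_le_div (by positivity)]
      exact_mod_cast hk
    rw [hinit k (by omega), Nat.cast_add_one]
    constructor
    · positivity
    · have := mul_le_mul_of_nonneg_left hstep hT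
      rw [mul_one_div] at this
      rw [mul_add, add_div, mul_one]
      linarith

theorem kusuoka_gap_eq (hrn : r < n)
    (hgraded : ∀ j, r < j → j ≤ n - 1 →
      t j = (T - t r) * (1 - (1 - ((j : ℝ) - r) / ((n : ℝ) - r)) ^ γ) + t r)
    {j : ℕ} (hrj : r ≤ j) (hjn : j ≤ n - 1) :
    T - t j = kusuokaGap (T - t r) γ (n - r) (n - j) := by
  have hnr : (0 : ℝ) < n - r := by rw [sub_pos]; exact_mod_cast hrn
  rw [kusuokaGap, Nat.cast_sub hrn.le, Nat.cast_sub (by omega)]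
  rcases hrj.eq_or_lt with rfl | hrj
  · rw [div_self hnr.ne', one_rpow, mul_one]
  · rw [hgraded j hrj hjn, one_sub_div hnr.ne']
    ring_nf

theorem kusuoka_sum_eq_sum_gap {a b : ℝ} (g : ℕ → ℝ) (hrn : r < n)
    (hgap : ∀ j, r ≤ j → j ≤ n - 1 → T - t j = g (n - j)) :
    ∑ j ∈ Ico r (n - 1), (t (j + 1) - t j) ^ a * (T - t (j + 1)) ^ (-b)
      = ∑ k ∈ Ico 1 (n - r), (g (k + 1) - g k) ^ a * g k ^ (-b) := by
  have h := sum_Ico_reflect (fun k => (g (k + 1) - g k) ^ a * g k ^ (-b)) r (Nat.le_succ (n - 1))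
  rw [show n - 1 + 1 - (n - 1) = 1 by omega, show n - 1 + 1 - r = n - r by omega] at h
  rw [← h]
  refine sum_congr rfl fun j hj => ?_
  obtain ⟨hrj, hjn⟩ := mem_Ico.mp hj
  rw [show n - 1 - j + 1 = n - j by omega, show n - 1 - j = n - (j + 1) by omega,
    ← hgap j hrj (by omega), ← hgap (j + 1) (by omega) (by omega)]
  ring_nf

end KusuokaPartition

/-- For `T > 0`, reals `a > b ≥ 0` and `γ ≥ 1` with `γ > (a-1)/(a-b)`, there is a
constant `C > 0` (depending only on `T, γ, a, b`) such that for all `n ≥ 2`, `r ≥ 1` with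
`r ≤ n/2`, the modified Kusuoka partition — `t 0 = 0`; `t (k+1) = t k + T * n^(-r/(k+1))` for
`k < r`; `t j = (T - t r) * (1 - (1 - (j-r)/(n-r))^γ) + t r` for `r < j ≤ n-1`; `t n = T` —
satisfies `∑_{j=r}^{n-2} (t (j+1) - t j)^a * (T - t (j+1))^(-b)
  ≤ C * (1 - r/n)^(-b) * (n - r)^(-(a-1))`. -/
theorem stmt_6 (T a b γ : ℝ) (hT : 0 < T) (hb : 0 ≤ b) (hab : b < a)
    (hγ1 : 1 ≤ γ) (hγ : (a - 1) / (a - b) < γ) :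
    ∃ C > 0, ∀ n r : ℕ, 2 ≤ n → 1 ≤ r → 2 * r ≤ n →
      ∀ t : ℕ → ℝ,
        t 0 = 0 →
        (∀ k, k < r → t (k + 1) = t k + T * (n : ℝ) ^ (-((r : ℝ) / ((k : ℝ) + 1)))) →
        (∀ j, r < j → j ≤ n - 1 →
          t j = (T - t r) * (1 - (1 - ((j : ℝ) - r) / ((n : ℝ) - r)) ^ γ) + t r) →
        t n = T →
        ∑ j ∈ Finset.Ico r (n - 1), (t (j + 1) - t j) ^ a * (T - t (j + 1)) ^ (-b)
          ≤ C * (1 - (r : ℝ) / n) ^ (-b) * ((n : ℝ) - r) ^ (-(a - 1)) := by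
  have he : -1 < γ * (a - b) - a := by
    have := (div_lt_iff₀ (sub_pos.mpr hab)).mp hγ
    linarith
  set K := γ ^ a * 2 ^ ((γ - 1) * a) * (1 + 1 / (γ * (a - b) - a + 1))
  have hK : 0 < K := by
    have : 0 < γ * (a - b) - a + 1 := by linarith
    positivity
  refine ⟨T ^ (a - b) * K, by positivity, fun n r hn hr hrn t ht0 hinit hgraded _ => ?_⟩
  have hrn' : r < n := by omega
  have hrn_real : (r : ℝ) < n := by exact_mod_cast hrn'
  have hr_div : (r : ℝ) / n < 1 := (div_lt_one (by positivity)).mpr hrn_real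
  obtain ⟨htr₀, htr⟩ := kusuoka_initial_bounds hT.le (by omega) ht0 hinit r le_rfl
  have htrT : t r < T := htr.trans_lt <| by
    rw [mul_div_assoc]
    exact mul_lt_of_lt_one_right hT hr_div
  calc ∑ j ∈ Finset.Ico r (n - 1), (t (j + 1) - t j) ^ a * (T - t (j + 1)) ^ (-b)
      = ∑ k ∈ Ico 1 (n - r), (kusuokaGap (T - t r) γ (n - r) (k + 1)
          - kusuokaGap (T - t r) γ (n - r) k) ^ a * kusuokaGap (T - t r) γ (n - r) k ^ (-b) :=
        kusuoka_sum_eq_sum_gap _ hrn' fun j hrj hjn => kusuoka_gap_eq hrn' hgraded hrj hjn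
    _ ≤ (T - t r) ^ (a - b) * K * ((n - r : ℕ) : ℝ) ^ (1 - a) :=
        sum_kusuokaGap_le _ (by linarith) (by linarith) hγ1 he
    _ ≤ T ^ (a - b) * K * 1 * ((n : ℝ) - r) ^ (-(a - 1)) := by
        rw [mul_one, Nat.cast_sub hrn'.le, neg_sub]
        gcongr
        linarith
    _ ≤ T ^ (a - b) * K * (1 - (r : ℝ) / n) ^ (-b) * ((n : ℝ) - r) ^ (-(a - 1)) := by
        gcongr
        exact one_le_rpow_of_pos_of_le_one_of_nonpos (by linarith)
          (sub_le_self _ (by positivity)) (by linarith)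
end

section
/- Let T > 0, let a > b ≥ 0 be real numbers, and let γ ≥ 1 satisfy γ > (a−1)/(a−b). Then there exists a constant C > 0, depending only on T, γ, a, b, such that for all integers n ≥ 2 and r ≥ 1 with r ≤ n/2, the modified Kusuoka partition (t_j) of [0,T] with parameters γ, r and n+1 points satisfies ∑_{j=0}^{n−2} (t_{j+1} − t_j)^a (T − t_{j+1})^{−b} ≤ C n^{−(a−1)} (1 − r/n)^{−(a+b−1)}. -/
/-!
Split the sum at `j = r`. On the initial segment every increment is at most `T / n` and
`T - t (j + 1) ≥ T / 2`, so the at most `n` terms contribute `O(n ^ (1 - a))`. On the tail,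
`T - t j = (T - t r) * w_j ^ γ` with `w_j = (n - j) / (n - r)`; the mean value bound for `w ↦ w ^ γ`
on `[w_{j+1}, w_j] ⊆ [w_{j+1}, 2 w_{j+1}]` makes the `j`-th term `O((n - r) ^ (-a) * w_{j+1} ^ e)`
with `e = γ (a - b) - a`. The hypothesis on `γ` is exactly `e > -1`, so the Riemann-type sum
`∑_q (q / (n - r)) ^ e` is `O(n - r)`. Finally `1 - r / n ∈ [1/2, 1]` absorbs both bounds into
`C * n ^ (-(a - 1)) * (1 - r / n) ^ (-(a + b - 1))`.
-/

open Real Finset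

theorem rpow_sub_rpow_le_mul_rpow_mul_sub {x y p : ℝ} (hx : 0 < x) (hy : 0 ≤ y) (hp : 1 ≤ p) :
    x ^ p - y ^ p ≤ p * x ^ (p - 1) * (x - y) := by
  have h := one_add_mul_self_le_rpow_one_add (s := y / x - 1)
    (by linarith [div_nonneg hy hx.le]) hp
  have hxp : x ^ p = x ^ (p - 1) * x := by rw [← rpow_add_one hx.ne', sub_add_cancel]
  rw [add_sub_cancel, div_rpow hy hx.le, le_div_iff₀ (rpow_pos_of_pos hx p), hxp] at h
  have : (1 + p * (y / x - 1)) * (x ^ (p - 1) * x) =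
      x ^ (p - 1) * x + p * x ^ (p - 1) * (y - x) := by
    field_simp
  linarith

theorem mul_rpow_mul_sub_le_rpow_sub_rpow {x y p : ℝ} (hx : 0 < x) (hy : 0 ≤ y) (hp₀ : 0 ≤ p)
    (hp₁ : p ≤ 1) : p * x ^ (p - 1) * (x - y) ≤ x ^ p - y ^ p := by
  have h := rpow_one_add_le_one_add_mul_self (s := y / x - 1)
    (by linarith [div_nonneg hy hx.le]) hp₀ hp₁
  have hxp : x ^ p = x ^ (p - 1) * x := by rw [← rpow_add_one hx.ne', sub_add_cancel]
  rw [add_sub_cancel, div_rpow hy hx.le, div_le_iff₀ (rpow_pos_of_pos hx p), hxp] at h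
  have : (1 + p * (y / x - 1)) * (x ^ (p - 1) * x) =
      x ^ (p - 1) * x + p * x ^ (p - 1) * (y - x) := by
    field_simp
  linarith

theorem sum_Icc_rpow_le {e : ℝ} (he : -1 < e) (he₀ : e ≤ 0) (N : ℕ) :
    ∑ q ∈ Icc 1 N, (q : ℝ) ^ e ≤ (N : ℝ) ^ (1 + e) / (1 + e) := by
  have h1e : 0 < 1 + e := by linarith
  induction N with
  | zero => simp [zero_rpow h1e.ne']
  | succ N ih =>
    have hstep := mul_rpow_mul_sub_le_rpow_sub_rpow (x := (N : ℝ) + 1) (y := N) (p := 1 + e)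
      (by positivity) (by positivity) h1e.le (by linarith)
    rw [add_sub_cancel_left, add_sub_cancel_left, mul_one] at hstep
    rw [sum_Icc_succ_top (by omega), le_div_iff₀ h1e] at *
    push_cast
    linarith

theorem sum_Icc_div_rpow_le {e m : ℝ} (he : -1 < e) (hm : 0 < m) {N : ℕ} (hN : (N : ℝ) ≤ m) :
    ∑ q ∈ Icc 1 N, ((q : ℝ) / m) ^ e ≤ (1 + 1 / (1 + e)) * m := by
  have h1e : 0 < 1 + e := by linarith
  have hm_le : m ≤ (1 + 1 / (1 + e)) * m := le_mul_of_one_le_left hm.le (by simp [h1e.le])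
  rcases le_or_gt 0 e with he₀ | he₀
  · calc ∑ q ∈ Icc 1 N, ((q : ℝ) / m) ^ e ≤ ∑ _q ∈ Icc 1 N, (1 : ℝ) := by
          refine sum_le_sum fun q hq => rpow_le_one (by positivity) ?_ he₀
          rw [div_le_one hm]
          exact le_trans (by exact_mod_cast (mem_Icc.mp hq).2) hN
      _ ≤ m := by simpa using hN
      _ ≤ _ := hm_le
  · simp_rw [div_rpow (Nat.cast_nonneg _) hm.le, ← sum_div]
    calc (∑ q ∈ Icc 1 N, (q : ℝ) ^ e) / m ^ e ≤ (N : ℝ) ^ (1 + e) / (1 + e) / m ^ e := by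
          gcongr; exact sum_Icc_rpow_le he he₀.le N
      _ ≤ m ^ (1 + e) / (1 + e) / m ^ e := by gcongr
      _ = 1 / (1 + e) * m := by rw [rpow_add hm, rpow_one]; field_simp
      _ ≤ _ := by gcongr; linarith

theorem one_le_two_rpow_abs_mul_rpow {x p : ℝ} (hx : 1 / 2 ≤ x) (hx₁ : x ≤ 1) :
    1 ≤ 2 ^ |p| * x ^ p := by
  rcases le_or_gt 0 p with hp | hp
  · rw [abs_of_nonneg hp, ← mul_rpow zero_le_two (by linarith)]
    exact one_le_rpow (by linarith) hp
  · calc (1 : ℝ) ≤ x ^ p := one_le_rpow_of_pos_of_le_one_of_nonpos (by linarith) hx₁ hp.le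
      _ ≤ 2 ^ |p| * x ^ p :=
          le_mul_of_one_le_left (by positivity) (one_le_rpow one_le_two (abs_nonneg p))

theorem mul_rpow_one_sub_le {N x a b : ℝ} (hN : 0 < N) (hx : 0 < x) (hx₁ : x ≤ 1)
    (hb : 0 ≤ b) : (N * x) ^ (1 - a) ≤ N ^ (-(a - 1)) * x ^ (-(a + b - 1)) := by
  rw [mul_rpow hN.le hx.le, neg_sub]
  exact mul_le_mul_of_nonneg_left (rpow_le_rpow_of_exponent_ge hx hx₁ (by linarith))
    (by positivity)

theorem mul_sub_rpow_rpow_mul_rpow_neg_le {M w₁ w₂ a b γ : ℝ} (hM : 0 < M) (hw₂ : 0 < w₂)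
    (hw : w₂ ≤ w₁) (hw₁ : w₁ ≤ 2 * w₂) (ha : 0 ≤ a) (hγ : 1 ≤ γ) :
    (M * (w₁ ^ γ - w₂ ^ γ)) ^ a * (M * w₂ ^ γ) ^ (-b) ≤
      (2 ^ (γ - 1) * γ * (w₁ - w₂)) ^ a * M ^ (a - b) * w₂ ^ (γ * (a - b) - a) := by
  have hw₁₀ : 0 < w₁ := hw₂.trans_le hw
  have hinc : w₁ ^ γ - w₂ ^ γ ≤ 2 ^ (γ - 1) * γ * (w₁ - w₂) * w₂ ^ (γ - 1) :=
    calc w₁ ^ γ - w₂ ^ γ ≤ γ * w₁ ^ (γ - 1) * (w₁ - w₂) :=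
          rpow_sub_rpow_le_mul_rpow_mul_sub hw₁₀ hw₂.le hγ
      _ ≤ γ * (2 * w₂) ^ (γ - 1) * (w₁ - w₂) := by
          gcongr
      _ = 2 ^ (γ - 1) * γ * (w₁ - w₂) * w₂ ^ (γ - 1) := by
          rw [mul_rpow zero_le_two hw₂.le]; ring
  have hinc₀ : 0 ≤ w₁ ^ γ - w₂ ^ γ := sub_nonneg.2 (rpow_le_rpow hw₂.le hw (by linarith))
  calc (M * (w₁ ^ γ - w₂ ^ γ)) ^ a * (M * w₂ ^ γ) ^ (-b)
      ≤ (M * (2 ^ (γ - 1) * γ * (w₁ - w₂) * w₂ ^ (γ - 1))) ^ a * (M * w₂ ^ γ) ^ (-b) := by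
        gcongr
    _ = (2 ^ (γ - 1) * γ * (w₁ - w₂)) ^ a * M ^ (a - b) * w₂ ^ (γ * (a - b) - a) := by
        have hK : 0 ≤ 2 ^ (γ - 1) * γ * (w₁ - w₂) :=
          mul_nonneg (by positivity) (sub_nonneg.2 hw)
        rw [mul_rpow hM.le (by positivity), mul_rpow hK (by positivity),
          mul_rpow hM.le (by positivity), ← rpow_mul hw₂.le, ← rpow_mul hw₂.le,
          show a - b = a + -b by ring, rpow_add hM,
          show γ * (a + -b) - a = (γ - 1) * a + γ * -b by ring, rpow_add hw₂]
        ring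

structure IsModKusuokaPartition (T γ : ℝ) (n r : ℕ) (t : ℕ → ℝ) : Prop where
  zero : t 0 = 0
  succ_of_lt : ∀ k < r, t (k + 1) = t k + T * (n : ℝ) ^ (-((r : ℝ) / ((k : ℝ) + 1)))
  of_lt_of_le : ∀ j, r < j → j ≤ n - 1 →
    t j = (T - t r) * (1 - (1 - ((j : ℝ) - r) / ((n : ℝ) - r)) ^ γ) + t r
  last : t n = T

namespace IsModKusuokaPartition

variable {T γ : ℝ} {n r : ℕ} {t : ℕ → ℝ}

theorem sub_mem_Icc_of_lt (ht : IsModKusuokaPartition T γ n r t) (hT : 0 ≤ T) (hn : 1 ≤ n)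
    {k : ℕ} (hk : k < r) : t (k + 1) - t k ∈ Set.Icc 0 (T / n) := by
  have hk1 : (1 : ℝ) ≤ r / ((k : ℝ) + 1) := by
    rw [le_div_iff₀ (by positivity), one_mul]; exact_mod_cast hk
  rw [ht.succ_of_lt k hk, add_sub_cancel_left, div_eq_mul_inv, ← rpow_neg_one]
  exact ⟨by positivity, mul_le_mul_of_nonneg_left
    (rpow_le_rpow_of_exponent_le (by exact_mod_cast hn) (by linarith)) hT⟩

theorem mem_Icc_of_le (ht : IsModKusuokaPartition T γ n r t) (hT : 0 ≤ T) (hn : 1 ≤ n)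
    {k : ℕ} (hk : k ≤ r) : t k ∈ Set.Icc 0 (T * k / n) := by
  induction k with
  | zero => simp [ht.zero]
  | succ k ih =>
    obtain ⟨h₀, h₁⟩ := ih (by omega)
    obtain ⟨hs₀, hs₁⟩ := ht.sub_mem_Icc_of_lt hT hn hk
    constructor
    · linarith
    · rw [Nat.cast_succ, mul_add_one, add_div]; linarith

theorem le_half (ht : IsModKusuokaPartition T γ n r t) (hT : 0 ≤ T) (hn : 1 ≤ n)
    (hrn : 2 * r ≤ n) {k : ℕ} (hk : k ≤ r) : t k ≤ T / 2 := by
  have hkn : (k : ℝ) * 2 ≤ n := by exact_mod_cast (by omega : k * 2 ≤ n)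
  calc t k ≤ T * k / n := (ht.mem_Icc_of_le hT hn hk).2
    _ ≤ T / 2 := by
      rw [div_le_div_iff₀ (by positivity) two_pos, mul_assoc]
      exact mul_le_mul_of_nonneg_left hkn hT

theorem sub_eq_of_le (ht : IsModKusuokaPartition T γ n r t) (hrn : r < n) {j : ℕ} (hrj : r ≤ j)
    (hjn : j ≤ n - 1) : T - t j = (T - t r) * (((n : ℝ) - j) / ((n : ℝ) - r)) ^ γ := by
  have hm : (n : ℝ) - r ≠ 0 := sub_ne_zero.2 (by exact_mod_cast hrn.ne')
  rcases hrj.eq_or_lt with rfl | hlt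
  · rw [div_self hm, one_rpow, mul_one]
  · rw [ht.of_lt_of_le j hlt hjn, one_sub_div hm, sub_sub_sub_cancel_right]
    ring

theorem sum_range_le (ht : IsModKusuokaPartition T γ n r t) {a b : ℝ} (hT : 0 < T) (ha : 0 ≤ a)
    (hb : 0 ≤ b) (hn : 1 ≤ n) (hrn : 2 * r ≤ n) :
    ∑ j ∈ range r, (t (j + 1) - t j) ^ a * (T - t (j + 1)) ^ (-b) ≤
      T ^ a * (T / 2) ^ (-b) * (n : ℝ) ^ (-(a - 1)) := by
  have hn₀ : (0 : ℝ) < n := by exact_mod_cast hn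
  have hterm : ∀ j ∈ range r,
      (t (j + 1) - t j) ^ a * (T - t (j + 1)) ^ (-b) ≤ (T / n) ^ a * (T / 2) ^ (-b) := by
    intro j hj
    obtain ⟨hs₀, hs₁⟩ := ht.sub_mem_Icc_of_lt hT.le hn (mem_range.1 hj)
    have hhalf := ht.le_half hT.le hn hrn (k := j + 1) (mem_range.1 hj)
    exact mul_le_mul (rpow_le_rpow hs₀ hs₁ ha)
      (rpow_le_rpow_of_nonpos (by positivity) (by linarith) (by linarith))
      (rpow_nonneg (by linarith) _) (by positivity)
  calc _ ≤ r * ((T / n) ^ a * (T / 2) ^ (-b)) := by simpa using sum_le_sum hterm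
    _ ≤ n * ((T / n) ^ a * (T / 2) ^ (-b)) := by gcongr; exact_mod_cast (by omega : r ≤ n)
    _ = _ := by
      rw [div_rpow hT.le hn₀.le, neg_sub, rpow_sub hn₀, rpow_one]
      field_simp

theorem tail_summand_le (ht : IsModKusuokaPartition T γ n r t) {a b : ℝ} (htr : t r < T)
    (ha : 0 ≤ a) (hγ : 1 ≤ γ) (hrn : r < n) {j q : ℕ} (hrj : r ≤ j) (hq : 1 ≤ q)
    (hjq : j + 1 + q = n) :
    (t (j + 1) - t j) ^ a * (T - t (j + 1)) ^ (-b) ≤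
      (2 ^ (γ - 1) * γ / ((n : ℝ) - r)) ^ a * (T - t r) ^ (a - b) *
        ((q : ℝ) / ((n : ℝ) - r)) ^ (γ * (a - b) - a) := by
  have hm : (0 : ℝ) < n - r := sub_pos.2 (by exact_mod_cast hrn)
  have hq₁ : (1 : ℝ) ≤ q := by exact_mod_cast hq
  have hjq' : (j : ℝ) + 1 + q = n := by exact_mod_cast hjq
  have h₁ := ht.sub_eq_of_le hrn hrj (by omega)
  have h₂ := ht.sub_eq_of_le hrn (j := j + 1) (by omega) (by omega)
  rw [show (n : ℝ) - j = q + 1 by linarith] at h₁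
  rw [show (n : ℝ) - ((j + 1 : ℕ) : ℝ) = q by push_cast; linarith] at h₂
  have hsub : t (j + 1) - t j =
      (T - t r) * (((q + 1) / ((n : ℝ) - r)) ^ γ - ((q : ℝ) / ((n : ℝ) - r)) ^ γ) := by
    rw [mul_sub]; linarith
  rw [hsub, h₂]
  convert mul_sub_rpow_rpow_mul_rpow_neg_le (b := b) (M := T - t r)
    (w₁ := (q + 1) / ((n : ℝ) - r)) (w₂ := q / ((n : ℝ) - r)) (sub_pos.2 htr) (by positivity)
    (by gcongr; linarith) (by rw [← mul_div_assoc]; gcongr; linarith) ha hγ using 4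
  ring

theorem sum_Ico_le (ht : IsModKusuokaPartition T γ n r t) {a b : ℝ} (hT : 0 < T) (hb : 0 ≤ b)
    (hab : b < a) (hγ : 1 ≤ γ) (he : -1 < γ * (a - b) - a) (hn : 1 ≤ n) (hrn : 2 * r ≤ n) :
    ∑ j ∈ Ico r (n - 1), (t (j + 1) - t j) ^ a * (T - t (j + 1)) ^ (-b) ≤
      (2 ^ (γ - 1) * γ) ^ a * T ^ (a - b) * (1 + 1 / (1 + (γ * (a - b) - a))) *
        ((n : ℝ) - r) ^ (1 - a) := by
  set e := γ * (a - b) - a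
  have hm : (0 : ℝ) < n - r := sub_pos.2 (by exact_mod_cast (by omega : r < n))
  have hN : ((n - 1 - r : ℕ) : ℝ) ≤ n - r := by
    rw [le_sub_iff_add_le]; exact_mod_cast (by omega : n - 1 - r + r ≤ n)
  have htr₀ : 0 ≤ t r := (ht.mem_Icc_of_le hT.le (by omega) le_rfl).1
  have htr : t r < T := (ht.le_half hT.le (by omega) hrn le_rfl).trans_lt (by linarith)
  calc _ ≤ ∑ j ∈ Ico r (n - 1), (2 ^ (γ - 1) * γ / ((n : ℝ) - r)) ^ a * (T - t r) ^ (a - b) *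
          (((n - 1 - j : ℕ) : ℝ) / ((n : ℝ) - r)) ^ e :=
        sum_le_sum fun j hj => ht.tail_summand_le htr (by linarith) hγ (by omega)
          (mem_Ico.1 hj).1 (by have := (mem_Ico.1 hj).2; omega) (by have := (mem_Ico.1 hj).2; omega)
    _ = ∑ q ∈ Icc 1 (n - 1 - r), (2 ^ (γ - 1) * γ / ((n : ℝ) - r)) ^ a * (T - t r) ^ (a - b) *
          ((q : ℝ) / ((n : ℝ) - r)) ^ e := by
        refine sum_nbij' (fun j => n - 1 - j) (fun q => n - 1 - q) ?_ ?_ ?_ ?_ fun _ _ => rfl <;>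
          intro x hx <;> simp only [mem_Ico, mem_Icc] at hx ⊢ <;> omega
    _ = (2 ^ (γ - 1) * γ / ((n : ℝ) - r)) ^ a * (T - t r) ^ (a - b) *
          ∑ q ∈ Icc 1 (n - 1 - r), ((q : ℝ) / ((n : ℝ) - r)) ^ e := by rw [mul_sum]
    _ ≤ (2 ^ (γ - 1) * γ / ((n : ℝ) - r)) ^ a * T ^ (a - b) * ((1 + 1 / (1 + e)) * (n - r)) := by
        gcongr
        · linarith
        · exact sum_Icc_div_rpow_le he hm hN
    _ = _ := by
        rw [div_rpow (by positivity) hm.le, rpow_sub hm, rpow_one]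
        field_simp

end IsModKusuokaPartition

/-- For `T > 0`, reals `a > b ≥ 0` and `γ ≥ 1` with `γ > (a-1)/(a-b)`, there is a
constant `C > 0` (depending only on `T, γ, a, b`) such that for all `n ≥ 2`, `r ≥ 1` with
`r ≤ n/2`, the modified Kusuoka partition — `t 0 = 0`; `t (k+1) = t k + T * n^(-r/(k+1))` for
`k < r`; `t j = (T - t r) * (1 - (1 - (j-r)/(n-r))^γ) + t r` for `r < j ≤ n-1`; `t n = T` —
satisfies `∑_{j=0}^{n-2} (t (j+1) - t j)^a * (T - t (j+1))^(-b)
  ≤ C * n^(-(a-1)) * (1 - r/n)^(-(a+b-1))`. -/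
theorem stmt_7 (T a b γ : ℝ) (hT : 0 < T) (hb : 0 ≤ b) (hab : b < a)
    (hγ1 : 1 ≤ γ) (hγ : (a - 1) / (a - b) < γ) :
    ∃ C > 0, ∀ n r : ℕ, 2 ≤ n → 1 ≤ r → 2 * r ≤ n →
      ∀ t : ℕ → ℝ,
        t 0 = 0 →
        (∀ k, k < r → t (k + 1) = t k + T * (n : ℝ) ^ (-((r : ℝ) / ((k : ℝ) + 1)))) →
        (∀ j, r < j → j ≤ n - 1 →
          t j = (T - t r) * (1 - (1 - ((j : ℝ) - r) / ((n : ℝ) - r)) ^ γ) + t r) →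
        t n = T →
        ∑ j ∈ Finset.range (n - 1), (t (j + 1) - t j) ^ a * (T - t (j + 1)) ^ (-b)
          ≤ C * (n : ℝ) ^ (-(a - 1)) * (1 - (r : ℝ) / n) ^ (-(a + b - 1)) := by
  have he : -1 < γ * (a - b) - a := by
    have := (div_lt_iff₀ (sub_pos.2 hab)).1 hγ
    linarith
  set C₁ := T ^ a * (T / 2) ^ (-b)
  set C₂ := (2 ^ (γ - 1) * γ) ^ a * T ^ (a - b) * (1 + 1 / (1 + (γ * (a - b) - a)))
  have hC₂ : 0 < C₂ := mul_pos (by positivity) (by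
    have := one_div_pos.2 (by linarith : 0 < 1 + (γ * (a - b) - a))
    linarith)
  refine ⟨2 ^ |a + b - 1| * C₁ + C₂, by positivity, ?_⟩
  intro n r hn _ hrn t h₀ hsucc htail hlast
  have ht : IsModKusuokaPartition T γ n r t := ⟨h₀, hsucc, htail, hlast⟩
  have hn₀ : (0 : ℝ) < n := by positivity
  have hx : 1 / 2 ≤ 1 - (r : ℝ) / n := by
    have : (2 * r : ℝ) ≤ n := by exact_mod_cast hrn
    have : (r : ℝ) / n ≤ 1 / 2 := by rw [div_le_iff₀ hn₀]; linarith
    linarith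
  have hx₁ : 1 - (r : ℝ) / n ≤ 1 := by
    have : 0 ≤ (r : ℝ) / n := by positivity
    linarith
  rw [← sum_range_add_sum_Ico _ (by omega : r ≤ n - 1)]
  calc _ ≤ C₁ * (n : ℝ) ^ (-(a - 1)) + C₂ * ((n : ℝ) - r) ^ (1 - a) :=
        add_le_add (ht.sum_range_le hT (by linarith) hb (by omega) hrn)
          (ht.sum_Ico_le hT hb hab hγ1 he (by omega) hrn)
    _ ≤ C₁ * ((n : ℝ) ^ (-(a - 1)) * (2 ^ |a + b - 1| * (1 - r / n) ^ (-(a + b - 1)))) +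
          C₂ * ((n : ℝ) ^ (-(a - 1)) * (1 - r / n) ^ (-(a + b - 1))) := by
        gcongr
        · exact le_mul_of_one_le_right (by positivity)
            (by simpa only [abs_neg] using
              one_le_two_rpow_abs_mul_rpow (p := -(a + b - 1)) hx hx₁)
        · rw [show (n : ℝ) - r = n * (1 - r / n) by field_simp]
          exact mul_rpow_one_sub_le hn₀ (by linarith) hx₁ hb
    _ = _ := by ring
end

section
/- Let d ≥ 1, let ω = (ω^1, …, ω^d) : [0,1] → ℝ^d be continuously differentiable with |(d/du) ω^i(u)| ≤ M for all u ∈ [0,1] and i = 1, …, d, let 0 ≤ t < s, and let ω(t,s)(u) := √(s−t) · ω((u−t)/(s−t)) be the rescaled path on [t,s]. Then for every multi-index α = (α_1, …, α_k) with entries in {0, 1, …, d}, |I^α_{t,s}[ω(t,s)](1)| ≤ (M^{k₁} / k!) · (s−t)^{‖α‖/2}, where k₁ = card{i : α_i ≠ 0} and ‖α‖ = k + card{i : α_i = 0}. -/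
open MeasureTheory intervalIntegral

/-- Iterated integral `I^α_{t,u}[η](1)` of the constant `1` along the (augmented) bounded
variation path `η : ℕ → ℝ → ℝ` over `[t,u]`, for a multi-index `α` (a list of indices in
`{0,…,d}`, with `0` denoting the time component).  It is defined recursively by
`I^∅ = 1` and `I^{(α₁,…,α_k)}_{t,u} = ∫_t^u I^{(α₁,…,α_{k-1})}_{t,v} (d/dv) η^{α_k}(v) dv`;
here the head of the list is the outermost (last) integrator `α_k`. -/
noncomputable def iint (η : ℕ → ℝ → ℝ) (t : ℝ) : List ℕ → ℝ → ℝ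
  | [], _ => 1
  | a :: rest, u => ∫ v in t..u, iint η t rest v * deriv (η a) v

/-!
On `[t, s]` the time integrator has derivative `1` and, by the chain rule, each space integrator
of the rescaled path has derivative bounded by `√(s - t) · M / (s - t) = M / √(s - t)`.
Inserting the inductive bound into the integrand gives
`|I^α_{t,u}| ≤ (∏ᵢ c_{αᵢ}) (u - t)^k / k!` for any such derivative bounds `c`, and at `u = s`
the `k₁` factors `1 / √(s - t)` turn `(s - t)^k` into `(s - t)^(‖α‖/2)`.
-/

open scoped Nat

theorem integral_sub_pow_div_factorial (n : ℕ) (t u : ℝ) :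
    ∫ v in t..u, (v - t) ^ n / n ! = (u - t) ^ (n + 1) / (n + 1)! := by
  rw [intervalIntegral.integral_div, integral_comp_sub_right (· ^ n), integral_pow, sub_self,
    zero_pow n.succ_ne_zero, sub_zero, Nat.factorial_succ]
  push_cast
  field_simp

theorem abs_iint_le {η : ℕ → ℝ → ℝ} {t s : ℝ} {c : ℕ → ℝ} {α : List ℕ}
    (hη : ∀ a ∈ α, ∀ v ∈ Set.Icc t s, |deriv (η a) v| ≤ c a) {u : ℝ} (hu : u ∈ Set.Icc t s) :
    |iint η t α u| ≤ (α.map c).prod * ((u - t) ^ α.length / α.length !) := by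
  induction α generalizing u with
  | nil => simp [iint]
  | cons a rest ih =>
    set n := rest.length
    have hpt : ∀ v ∈ Set.Ioc t u,
        ‖iint η t rest v * deriv (η a) v‖ ≤ c a * (rest.map c).prod * ((v - t) ^ n / n !) := by
      intro v hv
      have hv' : v ∈ Set.Icc t s := ⟨hv.1.le, hv.2.trans hu.2⟩
      have hrest := ih (fun b hb => hη b (List.mem_cons_of_mem a hb)) hv'
      rw [Real.norm_eq_abs, abs_mul, mul_comm (c a), mul_right_comm]
      exact mul_le_mul hrest (hη a List.mem_cons_self v hv') (abs_nonneg _)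
        ((abs_nonneg _).trans hrest)
    calc |iint η t (a :: rest) u|
        ≤ ∫ v in t..u, c a * (rest.map c).prod * ((v - t) ^ n / n !) :=
          intervalIntegral.norm_integral_le_of_norm_le hu.1 (ae_of_all _ hpt)
            (Continuous.intervalIntegrable (by fun_prop) t u)
      _ = ((a :: rest).map c).prod * ((u - t) ^ (n + 1) / (n + 1)!) := by
          rw [intervalIntegral.integral_const_mul, integral_sub_pow_div_factorial,
            List.map_cons, List.prod_cons]

theorem abs_deriv_rescale_le {f : ℝ → ℝ} {M t s v : ℝ} (hf : Differentiable ℝ f)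
    (hM : ∀ x ∈ Set.Icc (0 : ℝ) 1, |deriv f x| ≤ M) (hts : t < s) (hv : v ∈ Set.Icc t s) :
    |deriv (fun u => √(s - t) * f ((u - t) / (s - t))) v| ≤ M / √(s - t) := by
  have hh : 0 < s - t := sub_pos.2 hts
  set x := (v - t) / (s - t)
  have hx : x ∈ Set.Icc (0 : ℝ) 1 :=
    ⟨div_nonneg (sub_nonneg.2 hv.1) hh.le, (div_le_one hh).2 (sub_le_sub_right hv.2 t)⟩
  have hderiv : HasDerivAt (fun u => √(s - t) * f ((u - t) / (s - t)))
      (√(s - t) * (deriv f x * (1 / (s - t)))) v :=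
    ((hf x).hasDerivAt.comp v (((hasDerivAt_id v).sub_const t).div_const (s - t))).const_mul _
  have hsq : √(s - t) / (s - t) = 1 / √(s - t) := by
    rw [div_eq_div_iff hh.ne' (Real.sqrt_pos.2 hh).ne', one_mul, Real.mul_self_sqrt hh.le]
  calc |deriv (fun u => √(s - t) * f ((u - t) / (s - t))) v|
      = √(s - t) / (s - t) * |deriv f x| := by
        rw [hderiv.deriv, abs_mul, abs_mul, abs_of_nonneg (Real.sqrt_nonneg _),
          abs_of_pos (one_div_pos.2 hh)]
        ring
    _ ≤ √(s - t) / (s - t) * M := by gcongr; exact hM x hx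
    _ = M / √(s - t) := by rw [hsq]; ring

theorem List.prod_map_ite_eq_zero {M : Type*} [CommMonoid M] (α : List ℕ) (x : M) :
    (α.map fun a => if a = 0 then 1 else x).prod = x ^ (α.length - α.count 0) := by
  induction α with
  | nil => simp
  | cons a rest ih =>
    have hle : rest.count 0 ≤ rest.length := List.count_le_length
    rcases eq_or_ne a 0 with rfl | ha
    · simp [ih]
    · simp only [List.map_cons, List.prod_cons, ih, List.length_cons, List.count_cons,
        beq_iff_eq, ha, if_false, add_zero]
      rw [Nat.sub_add_comm hle, pow_succ']

theorem div_sqrt_pow_mul_pow {h : ℝ} (hh : 0 < h) (M : ℝ) {k j : ℕ} (hjk : j ≤ k) :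
    (M / √h) ^ (k - j) * h ^ k = M ^ (k - j) * h ^ (((k + j : ℕ) : ℝ) / 2) := by
  have hpow : h ^ (((k + j : ℕ) : ℝ) / 2) = √h ^ (k + j) := by
    rw [Real.sqrt_eq_rpow, ← Real.rpow_natCast, ← Real.rpow_mul hh.le]
    ring_nf
  have hk : h ^ k = √h ^ (k - j) * √h ^ (k + j) := by
    rw [← pow_add, show k - j + (k + j) = 2 * k by omega, pow_mul, Real.sq_sqrt hh.le]
  rw [hpow, hk, div_pow]
  field_simp

theorem stmt_12_general (d : ℕ) (ω : ℕ → ℝ → ℝ) (M : ℝ)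
    (hC1 : ∀ i, 1 ≤ i → i ≤ d → ContDiff ℝ 1 (ω i))
    (hM : ∀ i, 1 ≤ i → i ≤ d → ∀ u ∈ Set.Icc (0 : ℝ) 1, |deriv (ω i) u| ≤ M)
    (t s : ℝ) (hts : t < s)
    (η : ℕ → ℝ → ℝ)
    (hη : ∀ a u, η a u =
      if a = 0 then u else Real.sqrt (s - t) * ω a ((u - t) / (s - t)))
    (α : List ℕ) (hα : ∀ a ∈ α, a ≤ d) :
    |iint η t α s|
      ≤ M ^ (α.length - α.count 0) / (Nat.factorial α.length)
          * (s - t) ^ (((α.length + α.count 0 : ℕ) : ℝ) / 2) := by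
  have hderiv : ∀ a ∈ α, ∀ v ∈ Set.Icc t s,
      |deriv (η a) v| ≤ if a = 0 then 1 else M / √(s - t) := by
    intro a ha v hv
    rcases eq_or_ne a 0 with rfl | ha0
    · simp [funext (hη 0)]
    · have ha1 : 1 ≤ a := Nat.one_le_iff_ne_zero.2 ha0
      simpa [ha0, funext (hη a)] using abs_deriv_rescale_le
        ((hC1 a ha1 (hα a ha)).differentiable one_ne_zero) (hM a ha1 (hα a ha)) hts hv
  have hbound := abs_iint_le hderiv (Set.right_mem_Icc.2 hts.le)
  rw [List.prod_map_ite_eq_zero, ← mul_div_assoc,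
    div_sqrt_pow_mul_pow (sub_pos.2 hts) M List.count_le_length] at hbound
  rwa [div_mul_eq_mul_div]

/-- Let `d ≥ 1`, let `ω = (ω^1,…,ω^d) : [0,1] → ℝ^d` be continuously
differentiable with `|(d/du) ω^i(u)| ≤ M` for all `u ∈ [0,1]`, `i = 1,…,d` (augmented with
time component `ω^0(u) = u`), let `0 ≤ t < s`, and let `ω(t,s)(u) = √(s-t) · ω((u-t)/(s-t))`
be the rescaled path on `[t,s]` (whose time component is `u ↦ u`).  Then for every multi-index
`α = (α₁,…,α_k)` with entries in `{0,1,…,d}`,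
`|I^α_{t,s}[ω(t,s)](1)| ≤ (M^k₁ / k!) · (s-t)^(‖α‖/2)`, where `k₁ = card{i : α_i ≠ 0}` and
`‖α‖ = k + card{i : α_i = 0}`. -/
theorem stmt_12 (d : ℕ) (hd : 1 ≤ d) (ω : ℕ → ℝ → ℝ) (M : ℝ)
    (hω0 : ∀ u : ℝ, ω 0 u = u)
    (hC1 : ∀ i, 1 ≤ i → i ≤ d → ContDiff ℝ 1 (ω i))
    (hM : ∀ i, 1 ≤ i → i ≤ d → ∀ u ∈ Set.Icc (0 : ℝ) 1, |deriv (ω i) u| ≤ M)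
    (t s : ℝ) (ht : 0 ≤ t) (hts : t < s)
    (η : ℕ → ℝ → ℝ)
    (hη : ∀ a u, η a u =
      if a = 0 then u else Real.sqrt (s - t) * ω a ((u - t) / (s - t)))
    (α : List ℕ) (hα : ∀ a ∈ α, a ≤ d) :
    |iint η t α s|
      ≤ M ^ (α.length - α.count 0) / (Nat.factorial α.length)
          * (s - t) ^ (((α.length + α.count 0 : ℕ) : ℝ) / 2) :=
  stmt_12_general d ω M hC1 hM t s hts η hη α hα
end
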